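/- arXiv:1009.4675 — 3 statements merged into one kernel-verified Lean document; each statement's English description precedes it below -/
import Mathlib

section
/- Let A be a bounded operator on a Hilbert space with ‖A² − A‖ ≤ ε for some ε < 1/16. Then for every complex ζ with |ζ − 1| = 1/2, the operator A − ζ is invertible, and its inverse is given by (A − ζ)⁻¹ = (A + ζ − 1)(ζ(1 − ζ) + R)⁻¹ where R = A² − A. -/
/-!
With `R = A² - A`, the two factors of `(A - ζ)(A + ζ - 1) = ζ(1 - ζ) + R` are polynomials
in `A` and commute, so `A - ζ` is invertible as soon as the right-hand side is. On the circle
`|ζ - 1| = 1/2` we have `|ζ(1 - ζ)| ≥ 1/4 > ‖R‖`, and the Neumann series inverts it.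
-/

theorem isUnit_smul_one_add_of_norm_lt {𝕜 R : Type*} [NormedField 𝕜] [NormedRing R]
    [NormedAlgebra 𝕜 R] [HasSummableGeomSeries R] {c : 𝕜} {r : R} (h : ‖r‖ < ‖c‖) :
    IsUnit (c • (1 : R) + r) := by
  have hc : c ≠ 0 := norm_pos_iff.mp ((norm_nonneg r).trans_lt h)
  have hsmall : ‖-(c⁻¹ • r)‖ < 1 := by
    rw [norm_neg, norm_smul, norm_inv, inv_mul_lt_one₀ (norm_pos_iff.mpr hc)]
    exact h
  have hfactor : c • (1 : R) + r = c • (1 - -(c⁻¹ • r)) := by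
    rw [sub_neg_eq_add, smul_add, smul_smul, mul_inv_cancel₀ hc, one_smul]
  rw [hfactor]
  exact (Units.oneSub _ hsmall).isUnit.smul (Units.mk0 c hc)

theorem Commute.ring_inverse_eq_mul_inverse_mul {M₀ : Type*} [MonoidWithZero M₀] {a b : M₀}
    (hab : Commute a b) (h : IsUnit (a * b)) : Ring.inverse a = b * Ring.inverse (a * b) := by
  rw [Ring.mul_inverse_rev' hab, ← mul_assoc,
    Ring.mul_inverse_cancel b (hab.isUnit_mul_iff.mp h).2, one_mul]

theorem sub_smul_one_mul_add_sub_one_smul_one {𝕜 R : Type*} [CommRing 𝕜] [Ring R]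
    [Algebra 𝕜 R] (a : R) (ζ : 𝕜) :
    (a - ζ • (1 : R)) * (a + (ζ - 1) • (1 : R)) =
      (ζ * (1 - ζ)) • (1 : R) + (a * a - a) := by
  simp only [sub_mul, mul_add, smul_mul_assoc, mul_smul_comm, one_mul, mul_one]
  module

theorem commute_sub_smul_one_add_smul_one {𝕜 R : Type*} [CommRing 𝕜] [Ring R] [Algebra 𝕜 R]
    (a : R) (c d : 𝕜) : Commute (a - c • (1 : R)) (a + d • (1 : R)) := by
  rw [Algebra.smul_def, Algebra.smul_def, mul_one, mul_one]
  exact ((Commute.refl a).sub_left (Algebra.commute_algebraMap_left c a)).add_right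
    ((Algebra.commute_algebraMap_right d a).sub_left (Algebra.commute_algebraMap_left c _))

theorem quarter_le_norm_mul_one_sub {𝕜 : Type*} [NormedDivisionRing 𝕜] {ζ : 𝕜}
    (hζ : ‖ζ - 1‖ = 1 / 2) : 1 / 4 ≤ ‖ζ * (1 - ζ)‖ := by
  have h1 : ‖1 - ζ‖ = 1 / 2 := by rw [norm_sub_rev, hζ]
  have h2 : 1 / 2 ≤ ‖ζ‖ := by
    have := norm_sub_norm_le (1 : 𝕜) ζ
    rw [norm_one, h1] at this
    linarith
  rw [norm_mul, h1]
  linarith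

/-- For a bounded operator `A` on a complex Hilbert space with
`‖A² − A‖ ≤ ε < 1/16` and `|ζ − 1| = 1/2`, the operator `A − ζ` is invertible with
inverse `(A + ζ − 1)(ζ(1 − ζ) + R)⁻¹` where `R = A² − A`. -/
theorem stmt_0 {H : Type*} [NormedAddCommGroup H] [InnerProductSpace ℂ H]
    [CompleteSpace H] (A : H →L[ℂ] H) (ε : ℝ) (hε : ε < 1 / 16)
    (hA : ‖A * A - A‖ ≤ ε) (ζ : ℂ) (hζ : ‖ζ - 1‖ = 1 / 2) :
    IsUnit ((ζ * (1 - ζ)) • (1 : H →L[ℂ] H) + (A * A - A)) ∧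
    IsUnit (A - ζ • (1 : H →L[ℂ] H)) ∧
    Ring.inverse (A - ζ • (1 : H →L[ℂ] H)) =
      (A + (ζ - 1) • (1 : H →L[ℂ] H)) *
        Ring.inverse ((ζ * (1 - ζ)) • (1 : H →L[ℂ] H) + (A * A - A)) := by
  have hsmall : ‖A * A - A‖ < ‖ζ * (1 - ζ)‖ := by
    linarith [quarter_le_norm_mul_one_sub hζ]
  have hunit := isUnit_smul_one_add_of_norm_lt hsmall
  have hcomm := commute_sub_smul_one_add_smul_one A ζ (ζ - 1)
  rw [← sub_smul_one_mul_add_sub_one_smul_one] at hunit ⊢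
  exact ⟨hunit, (hcomm.isUnit_mul_iff.mp hunit).1, hcomm.ring_inverse_eq_mul_inverse_mul hunit⟩
end

section
/- Let A be a bounded operator on a Hilbert space with ‖A² − A‖ ≤ ε, ε sufficiently small. Define the Riesz projection Π_A := (2πi)⁻¹ ∮_{|ζ−1|=1/2} (ζ − A)⁻¹ dζ. Then Π_A is a projection (Π_A² = Π_A) and ‖A − Π_A‖ = O(ε) as ε → 0, with a constant independent of A (given a uniform bound ‖A‖ ≤ M). -/
/-!
Let `B = A² - A`. The Catalan series `v = ∑ Cₙ (-B)ⁿ⁺¹` is the small root of `v² = v + B`: it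
commutes with `A` and `‖v‖ ≤ 2ε`. Then `P = (A - v)(1 - 2v)⁻¹` is an idempotent commuting with `v`,
with `A = P(1 - v) + (1 - P)v`, so `A - P = (1 - 2A)(1 - 2v)⁻¹v = O(ε)`. Along this splitting,
`(ζ - A)⁻¹ = P(ζ - 1 + v)⁻¹ + (1 - P)(ζ - v)⁻¹`. On the circle `|ζ - 1| = 1/2` the first resolvent
integrates to `2πi` (its Neumann series in `(ζ - 1)⁻¹`, integrated termwise) and the second to `0`
(it is holomorphic on the disc), so the Riesz projection is exactly `P`.
-/

open Metric Complex Real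

section Catalan

variable {R : Type*} [NormedRing R]

theorem catalan_le_four_pow (n : ℕ) : catalan n ≤ 4 ^ n :=
  calc catalan n ≤ n.centralBinom := by
        rw [catalan_eq_centralBinom_div]; exact Nat.div_le_self _ _
    _ ≤ 4 ^ n := Nat.centralBinom_le_four_pow n

theorem norm_two_mul_le (x : R) : ‖2 * x‖ ≤ 2 * ‖x‖ := by
  rw [two_mul, two_mul]; exact norm_add_le x x

noncomputable def catalanSum (x : R) : R := ∑' n, catalan n • x ^ (n + 1)

theorem Commute.catalanSum_right {a x : R} (h : Commute a x) : Commute a (catalanSum x) :=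
  .tsum_right a fun _ ↦ (h.pow_right _).smul_right _

theorem norm_catalan_smul_pow_le (x : R) (n : ℕ) :
    ‖catalan n • x ^ (n + 1)‖ ≤ ‖x‖ * (4 * ‖x‖) ^ n :=
  calc ‖catalan n • x ^ (n + 1)‖ ≤ catalan n * ‖x ^ (n + 1)‖ := norm_nsmul_le ..
    _ ≤ 4 ^ n * ‖x‖ ^ (n + 1) := by
        gcongr
        · exact_mod_cast catalan_le_four_pow n
        · exact norm_pow_le' x n.succ_pos
    _ = ‖x‖ * (4 * ‖x‖) ^ n := by ring

theorem summable_norm_catalan_smul_pow {x : R} (hx : ‖x‖ < 1 / 4) :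
    Summable fun n ↦ ‖catalan n • x ^ (n + 1)‖ :=
  .of_nonneg_of_le (fun _ ↦ norm_nonneg _) (norm_catalan_smul_pow_le x)
    ((summable_geometric_of_lt_one (by positivity) (by linarith)).mul_left _)

theorem norm_catalanSum_le {x : R} (hx : ‖x‖ ≤ 1 / 8) : ‖catalanSum x‖ ≤ 2 * ‖x‖ := by
  have hx4 : 4 * ‖x‖ < 1 := by linarith
  calc ‖catalanSum x‖ ≤ ‖x‖ * (1 - 4 * ‖x‖)⁻¹ :=
        tsum_of_norm_bounded ((hasSum_geometric_of_lt_one (by positivity) hx4).mul_left _)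
          (norm_catalan_smul_pow_le x)
    _ ≤ 2 * ‖x‖ := by
        rw [mul_comm]
        gcongr
        rw [inv_le_comm₀ (by linarith) (by norm_num)]
        linarith

theorem catalanSum_mul_self [CompleteSpace R] {x : R} (hx : ‖x‖ < 1 / 4) :
    catalanSum x * catalanSum x = catalanSum x - x := by
  have hs := summable_norm_catalan_smul_pow hx
  rw [catalanSum, tsum_mul_tsum_eq_tsum_sum_antidiagonal_of_summable_norm hs hs,
    hs.of_norm.tsum_eq_zero_add, catalan_zero, one_smul, zero_add, pow_one, add_sub_cancel_left]
  refine tsum_congr fun n ↦ ?_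
  rw [catalan_succ', Finset.sum_smul]
  refine Finset.sum_congr rfl fun kl hkl ↦ ?_
  rw [smul_mul_smul_comm, ← pow_add, ← Finset.HasAntidiagonal.mem_antidiagonal.mp hkl]
  ring_nf

end Catalan

section Idempotent

variable {R : Type*} [Ring R]

theorem IsIdempotentElem.mul_add_one_sub_mul_mul_eq_one {p x x' y y' : R}
    (hp : IsIdempotentElem p) (hx : Commute p x) (hy : Commute p y) (hxx' : x * x' = 1)
    (hyy' : y * y' = 1) : (p * x + (1 - p) * y) * (p * x' + (1 - p) * y') = 1 := by
  have swap : ∀ {f z : R} (e w : R), Commute f z → e * z * (f * w) = e * f * (z * w) := by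
    intro f z e w h
    rw [mul_assoc, ← mul_assoc z, ← h.eq, mul_assoc, mul_assoc]
  simp only [add_mul, mul_add, swap _ _ hx, swap _ _ hy,
    swap _ _ ((Commute.one_left x).sub_left hx), swap _ _ ((Commute.one_left y).sub_left hy), hp.eq, hp.one_sub.eq, hp.mul_one_sub_self,
    hp.one_sub_mul_self, hxx', hyy']
  noncomm_ring

theorem IsIdempotentElem.ringInverse_mul_add_one_sub_mul {p x y : R} (hp : IsIdempotentElem p)
    (hx : Commute p x) (hy : Commute p y) (ux : IsUnit x) (uy : IsUnit y) :
    Ring.inverse (p * x + (1 - p) * y) = p * Ring.inverse x + (1 - p) * Ring.inverse y := by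
  obtain ⟨x, rfl⟩ := ux
  obtain ⟨y, rfl⟩ := uy
  let u : Rˣ := ⟨_, _, hp.mul_add_one_sub_mul_mul_eq_one hx hy x.mul_inv y.mul_inv,
    hp.mul_add_one_sub_mul_mul_eq_one hx.units_inv_right hy.units_inv_right x.inv_mul y.inv_mul⟩
  rw [Ring.inverse_unit, Ring.inverse_unit]
  exact Ring.inverse_unit u

variable {a v : R} (t : Rˣ)

theorem isIdempotentElem_sub_mul_inv (hav : Commute a v) (hv : v * v = v + (a * a - a))
    (ht : (t : R) = 1 - 2 * v) : IsIdempotentElem ((a - v) * ↑t⁻¹) := by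
  have hsq : (a - v) * (a - v) = (a - v) * t := by
    rw [ht]
    simp only [sub_mul, mul_sub, mul_one, two_mul, mul_add, hv, hav.eq]
    abel
  have hc : Commute (a - v) ↑t⁻¹ := by
    refine Commute.units_inv_right ?_
    rw [ht]
    exact (Commute.one_right _).sub_right
      ((Commute.ofNat_right _ 2).mul_right (hav.sub_left (.refl v)))
  calc (a - v) * ↑t⁻¹ * ((a - v) * ↑t⁻¹) = (a - v) * (a - v) * ↑t⁻¹ * ↑t⁻¹ := by
        rw [mul_assoc, ← mul_assoc _ (a - v), ← hc.eq]; simp only [mul_assoc]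
    _ = (a - v) * ↑t⁻¹ := by rw [hsq, mul_assoc _ (t : R), Units.mul_inv, mul_one]

theorem sub_mul_inv_mul_one_sub_add (ht : (t : R) = 1 - 2 * v) :
    (a - v) * ↑t⁻¹ * (1 - v) + (1 - (a - v) * ↑t⁻¹) * v = a :=
  calc _ = (a - v) * ↑t⁻¹ * t + v := by rw [ht]; noncomm_ring
    _ = a := by rw [Units.inv_mul_cancel_right, sub_add_cancel]

theorem sub_sub_mul_inv (ht : (t : R) = 1 - 2 * v) :
    a - (a - v) * ↑t⁻¹ = (1 - 2 * a) * ↑t⁻¹ * v := by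
  have h2p : 1 - 2 * ((a - v) * ↑t⁻¹) = (1 - 2 * a) * ↑t⁻¹ :=
    calc _ = (t - 2 * (a - v)) * ↑t⁻¹ := by rw [sub_mul (t : R), Units.mul_inv, mul_assoc]
      _ = (1 - 2 * a) * ↑t⁻¹ := by rw [ht]; noncomm_ring
  calc a - (a - v) * ↑t⁻¹
      = (a - v) * ↑t⁻¹ * (1 - v) + (1 - (a - v) * ↑t⁻¹) * v - (a - v) * ↑t⁻¹ := by
        rw [sub_mul_inv_mul_one_sub_add t ht]
    _ = (1 - 2 * ((a - v) * ↑t⁻¹)) * v := by noncomm_ring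
    _ = (1 - 2 * a) * ↑t⁻¹ * v := by rw [h2p]

end Idempotent

theorem exists_isIdempotentElem_of_norm_mul_self_sub_le {R : Type*} [NormedRing R]
    [NormOneClass R] [CompleteSpace R] {a : R} {ε : ℝ} (ha : ‖a * a - a‖ ≤ ε) (hε : ε ≤ 1 / 8) :
    ∃ p v : R, IsIdempotentElem p ∧ Commute p v ∧ p * (1 - v) + (1 - p) * v = a ∧
      ‖v‖ ≤ 2 * ε ∧ ‖a - p‖ ≤ (8 * ‖a‖ + 4) * ε := by
  set v := catalanSum (-(a * a - a))
  have hx : ‖-(a * a - a)‖ ≤ 1 / 8 := by rw [norm_neg]; linarith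
  have hv : v * v = v + (a * a - a) := by
    rw [catalanSum_mul_self (by linarith), sub_neg_eq_add]
  have hvε : ‖v‖ ≤ 2 * ε := (norm_catalanSum_le hx).trans (by rw [norm_neg]; linarith)
  have hav : Commute a v :=
    (((Commute.refl a).mul_right (.refl a)).sub_right (.refl a)).neg_right.catalanSum_right
  have h2v : ‖2 * v‖ ≤ 1 / 2 := by linarith [norm_two_mul_le v]
  set t := Units.oneSub (2 * v) (by linarith)
  have htv : Commute (t : R) v :=
    (Commute.one_left v).sub_left ((Commute.ofNat_left 2 v).mul_left (.refl v))
  have ht : ‖(↑t⁻¹ : R)‖ ≤ 2 :=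
    calc ‖(↑t⁻¹ : R)‖ ≤ ‖(1 : R)‖ - 1 + (1 - ‖2 * v‖)⁻¹ :=
          tsum_geometric_le_of_norm_lt_one _ (by linarith)
      _ ≤ 2 := by
          rw [norm_one, sub_self, zero_add, inv_le_comm₀ (by linarith) (by norm_num)]
          linarith
  have h2a : ‖1 - 2 * a‖ ≤ 1 + 2 * ‖a‖ :=
    (norm_sub_le _ _).trans (by rw [norm_one]; linarith [norm_two_mul_le a])
  refine ⟨(a - v) * ↑t⁻¹, v, isIdempotentElem_sub_mul_inv t hav hv rfl,
    (hav.sub_left (.refl v)).mul_left htv.units_inv_left, sub_mul_inv_mul_one_sub_add t rfl,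
    hvε, ?_⟩
  rw [sub_sub_mul_inv t rfl]
  calc ‖(1 - 2 * a) * ↑t⁻¹ * v‖ ≤ ‖1 - 2 * a‖ * ‖(↑t⁻¹ : R)‖ * ‖v‖ := norm_mul₃_le
    _ ≤ (1 + 2 * ‖a‖) * 2 * (2 * ε) := by gcongr
    _ = (8 * ‖a‖ + 4) * ε := by ring

theorem circleIntegral_sub_center_inv_pow (c : ℂ) {r : ℝ} (hr : r ≠ 0) (n : ℕ) :
    (∮ z in C(c, r), ((z - c)⁻¹) ^ (n + 1)) = if n = 0 then 2 * π * I else 0 := by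
  rcases n with _ | n
  · simpa using circleIntegral.integral_sub_center_inv c hr
  · simp_rw [if_neg n.succ_ne_zero, inv_pow, ← zpow_natCast, ← zpow_neg]
    exact circleIntegral.integral_sub_zpow_of_ne (by omega) _ _ _

theorem hasSum_circleIntegral_of_norm_le {E : Type*} [NormedAddCommGroup E] [NormedSpace ℂ E]
    [CompleteSpace E] {f : ℕ → ℂ → E} {u : ℕ → ℝ} {c : ℂ} {r : ℝ} (hr : 0 ≤ r) (hu : Summable u)
    (hf : ∀ n, ContinuousOn (f n) (sphere c r)) (hfu : ∀ n, ∀ z ∈ sphere c r, ‖f n z‖ ≤ u n) :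
    HasSum (fun n ↦ ∮ z in C(c, r), f n z) (∮ z in C(c, r), ∑' n, f n z) :=
  ((tendstoUniformlyOn_tsum hu hfu).tendsto_circleIntegral_of_continuousOn hr
    (.of_forall fun s ↦ continuousOn_finsetSum s fun n _ ↦ hf n)).congr
    fun _ ↦ circleIntegral.integral_fun_sum fun n _ ↦ (hf n).circleIntegrable hr

section Resolvent

variable {R : Type*} [NormedRing R] [NormedAlgebra ℂ R] [CompleteSpace R]

theorem circleIntegral.integral_const_mul_of_circleIntegrable {f : ℂ → R} {c : ℂ} {r : ℝ}
    (hf : CircleIntegrable f c r) (p : R) :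
    (∮ z in C(c, r), p * f z) = p * ∮ z in C(c, r), f z := by
  unfold circleIntegral
  simpa only [ContinuousLinearMap.mul_apply', mul_smul_comm] using
    (ContinuousLinearMap.mul ℂ R p).intervalIntegral_comp_comm hf.out

theorem hasSum_resolvent {a : R} {w : ℂ} (h : ‖a‖ < ‖w‖) :
    HasSum (fun n ↦ (w⁻¹) ^ (n + 1) • a ^ n) (resolvent a w) := by
  have hw : w ≠ 0 := norm_pos_iff.mp ((norm_nonneg a).trans_lt h)
  have hlt : ‖w⁻¹ • a‖ < 1 := by
    rw [norm_smul, norm_inv, inv_mul_lt_iff₀ (norm_pos_iff.mpr hw), mul_one]; exact h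
  have hres : resolvent a w = w⁻¹ • Ring.inverse (1 - w⁻¹ • a) := by
    have := spectrum.units_smul_resolvent_self (r := Units.mk0 w hw) (a := a)
    rw [Units.smul_def, Units.val_mk0] at this
    rw [← inv_smul_smul₀ hw (resolvent a w), this, resolvent, map_one, Units.smul_def,
      Units.val_inv_eq_inv_val, Units.val_mk0]
  rw [hres]
  convert (hasSum_geom_series_inverse _ hlt).const_smul w⁻¹ using 2 with n
  rw [smul_pow, smul_smul, pow_succ']

variable [NormOneClass R]

theorem differentiableAt_resolvent_of_norm_lt {a : R} {z : ℂ} (h : ‖a‖ < ‖z‖) :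
    DifferentiableAt ℂ (resolvent a) z :=
  (spectrum.hasDerivAt_resolvent_const_left
    (spectrum.mem_resolventSet_of_norm_lt h)).differentiableAt

theorem circleIntegral_resolvent_sub_center {a : R} {c : ℂ} {r : ℝ} (h : ‖a‖ < r) :
    (∮ z in C(c, r), resolvent a (z - c)) = (2 * π * I) • 1 := by
  have hr : 0 < r := (norm_nonneg a).trans_lt h
  have hsum := hasSum_circleIntegral_of_norm_le (c := c)
    (f := fun n z ↦ ((z - c)⁻¹) ^ (n + 1) • a ^ n) (u := fun n ↦ r⁻¹ * (r⁻¹ * ‖a‖) ^ n) hr.le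
    ((summable_geometric_of_lt_one (by positivity)
      (by rwa [inv_mul_lt_iff₀ hr, mul_one])).mul_left _)
    (fun n ↦ (((continuousOn_id.sub continuousOn_const).inv₀ fun z hz ↦
      sub_ne_zero.mpr (ne_of_mem_sphere hz hr.ne')).pow _).smul continuousOn_const)
    (fun n z hz ↦ by
      rw [norm_smul, norm_pow, norm_inv, mem_sphere_iff_norm.mp hz]
      calc r⁻¹ ^ (n + 1) * ‖a ^ n‖ ≤ r⁻¹ ^ (n + 1) * ‖a‖ ^ n := by gcongr; exact norm_pow_le a n
        _ = r⁻¹ * (r⁻¹ * ‖a‖) ^ n := by ring)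
  rw [circleIntegral.integral_congr hr.le fun z hz ↦ (hasSum_resolvent
    (by rwa [mem_sphere_iff_norm.mp hz])).tsum_eq.symm]
  have hsingle : HasSum (fun n : ℕ ↦ (if n = 0 then 2 * π * I else 0) • a ^ n)
      ((2 * π * I) • 1) := by
    simpa using hasSum_single (f := fun n : ℕ ↦ (if n = 0 then 2 * π * I else 0) • a ^ n) 0
      fun n hn ↦ by simp [hn]
  refine hsum.unique (hsingle.congr_fun fun n ↦ ?_)
  rw [circleIntegral.integral_smul_const, circleIntegral_sub_center_inv_pow c hr.ne']

theorem circleIntegral_resolvent_eq_zero {a : R} {c : ℂ} {r : ℝ} (hr : 0 ≤ r)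
    (h : ‖a‖ + r < ‖c‖) : (∮ z in C(c, r), resolvent a z) = 0 := by
  have hd : ∀ z ∈ closedBall c r, DifferentiableAt ℂ (resolvent a) z := fun z hz ↦
    differentiableAt_resolvent_of_norm_lt (by
      have := norm_sub_norm_le c z
      rw [mem_closedBall_iff_norm'] at hz
      linarith)
  exact Complex.circleIntegral_eq_zero_of_differentiable_on_off_countable hr Set.countable_empty
    (fun z hz ↦ (hd z hz).continuousAt.continuousWithinAt)
    (fun z hz ↦ hd z (ball_subset_closedBall hz.1))

theorem circleIntegral_resolvent_idempotent_mul_add {p v : R} (hp : IsIdempotentElem p)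
    (hpv : Commute p v) {r : ℝ} (hr : ‖v‖ < r) (hr1 : ‖v‖ + r < 1) :
    (∮ z in C(1, r), resolvent (p * (1 - v) + (1 - p) * v) z) = (2 * π * I) • p := by
  have hr0 : 0 < r := (norm_nonneg v).trans_lt hr
  have hnorm : ∀ z ∈ sphere (1 : ℂ) r, ‖-v‖ < ‖z - 1‖ ∧ ‖v‖ < ‖z‖ := fun z hz ↦ by
    rw [norm_neg, mem_sphere_iff_norm.mp hz]
    refine ⟨hr, ?_⟩
    linarith [norm_sub_norm_le 1 z, norm_sub_rev z 1, mem_sphere_iff_norm.mp hz, norm_one (α := ℂ)]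
  have hsplit : ∀ z ∈ sphere (1 : ℂ) r, resolvent (p * (1 - v) + (1 - p) * v) z =
      p * resolvent (-v) (z - 1) + (1 - p) * resolvent v z := fun z hz ↦ by
    have hcomm : ∀ w : ℂ, ∀ b, Commute p b → Commute p (algebraMap ℂ R w - b) := fun w b hb ↦
      (Algebra.commute_algebraMap_right w p).sub_right hb
    rw [resolvent, resolvent, resolvent, ← hp.ringInverse_mul_add_one_sub_mul
      (hcomm _ _ hpv.neg_right) (hcomm _ _ hpv)
      (spectrum.mem_resolventSet_of_norm_lt (hnorm z hz).1)
      (spectrum.mem_resolventSet_of_norm_lt (hnorm z hz).2), map_sub, map_one]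
    congr 1
    noncomm_ring
  have hc₁ : ContinuousOn (fun z ↦ resolvent (-v) (z - 1)) (sphere (1 : ℂ) r) := fun z hz ↦
    ((differentiableAt_resolvent_of_norm_lt (hnorm z hz).1).continuousAt.comp
      (f := fun z ↦ z - 1) (by fun_prop)).continuousWithinAt
  have hc₂ : ContinuousOn (resolvent v) (sphere (1 : ℂ) r) := fun z hz ↦
    (differentiableAt_resolvent_of_norm_lt (hnorm z hz).2).continuousAt.continuousWithinAt
  rw [circleIntegral.integral_congr hr0.le hsplit,
    circleIntegral.integral_add (f := fun z ↦ p * resolvent (-v) (z - 1))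
      (g := fun z ↦ (1 - p) * resolvent v z) ((continuousOn_const.mul hc₁).circleIntegrable hr0.le)
      ((continuousOn_const.mul hc₂).circleIntegrable hr0.le),
    circleIntegral.integral_const_mul_of_circleIntegrable (hc₁.circleIntegrable hr0.le),
    circleIntegral.integral_const_mul_of_circleIntegrable (hc₂.circleIntegrable hr0.le),
    circleIntegral_resolvent_sub_center (by rwa [norm_neg]),
    circleIntegral_resolvent_eq_zero hr0.le (by rwa [norm_one]), mul_zero, add_zero,
    mul_smul_comm, mul_one]

end Resolvent

/-- If `‖A² − A‖ ≤ ε` with `ε` small, the Riesz projection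
`Π_A = (2πi)⁻¹ ∮_{|ζ−1|=1/2} (ζ − A)⁻¹ dζ` is a projection and `‖A − Π_A‖ = O(ε)`,
with constant depending only on a bound `‖A‖ ≤ M`. -/
theorem stmt_1 (M : ℝ) (hM : 0 < M) :
    ∃ C > (0 : ℝ), ∃ ε₀ > (0 : ℝ), ∀ (H : Type) (_ : NormedAddCommGroup H)
      (_ : InnerProductSpace ℂ H) (_ : CompleteSpace H),
      ∀ (A : H →L[ℂ] H) (ε : ℝ), 0 ≤ ε → ε < ε₀ → ‖A‖ ≤ M → ‖A * A - A‖ ≤ ε →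
      (let RieszProj : H →L[ℂ] H :=
        (2 * (Real.pi : ℂ) * Complex.I)⁻¹ •
          (∮ ζ in C(1, 1 / 2), Ring.inverse (ζ • (1 : H →L[ℂ] H) - A));
       RieszProj * RieszProj = RieszProj ∧ ‖A - RieszProj‖ ≤ C * ε) := by
  refine ⟨8 * M + 4, by positivity, 1 / 8, by norm_num, fun H _ _ _ A ε hε0 hε hAM hB ↦ ?_⟩
  intro RieszProj
  -- on the zero space `‖1‖ = 0`, so `H →L[ℂ] H` is a `NormOneClass` only when `H` is nontrivial
  rcases subsingleton_or_nontrivial H with hH | hH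
  · refine ⟨Subsingleton.elim _ _, ?_⟩
    rw [Subsingleton.elim (A - RieszProj) 0, norm_zero]
    positivity
  obtain ⟨P, v, hP, hPv, hA, hv, hAP⟩ := exists_isIdempotentElem_of_norm_mul_self_sub_le hB hε.le
  have hRiesz : RieszProj = P := by
    simp only [RieszProj, ← Algebra.algebraMap_eq_smul_one]
    rw [← hA]
    change (2 * (π : ℂ) * I)⁻¹ • (∮ z in C(1, 1 / 2), resolvent _ z) = P
    rw [circleIntegral_resolvent_idempotent_mul_add hP hPv (by linarith) (by linarith),
      inv_smul_smul₀ two_pi_I_ne_zero]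
  rw [hRiesz]
  exact ⟨hP, hAP.trans (by gcongr)⟩
end

section
/- One-dimensional Agmon-type estimate: Let P = h²D_R² + W(R) act on L²((0,∞)) with Dirichlet condition at 0, where W is continuous, bounded below, and satisfies W(R) − E ≥ c > 0 for R ∈ (0, r₀) ∪ (R₀, ∞). If Pφ = Eφ with ‖φ‖ = 1, then there exist c₀ > 0 and h₀ > 0 (depending only on c, r₀, R₀, sup W, E) such that ‖φ‖_{L²((0, r₀/2) ∪ (2R₀, ∞))} ≤ e^{−c₀/h} for all 0 < h < h₀. -/
/-!
In the forbidden region the density `ψ = φ²` is a subsolution: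
`ψ'' = 2φ'² + 2(W - E)φ²/h² ≥ k²ψ` with `k = √(2c)/h`. For such `ψ` the weighted Wronskian
`e^{-κx}(ψ' + κψ)` is nondecreasing for either sign of `κ = ±k`, which gives two one-sided
comparison principles: `e^{-kx}ψ` increases on `[0, a]` because `ψ(0) = 0`, and `e^{kx}ψ`
decreases on `[a, ∞)` because `ψ` is integrable. Taking `a` inside the forbidden region at a point
where `ψ` is at most its mean over an interval of length `≍ r₀`, the mass of `ψ` at distance
`≳ r₀` from the allowed region is `O(e^{-k r₀/4})`, which is below `e^{-2c₀/h}` for small `h`.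
-/

open MeasureTheory Set Real

lemma not_integrableOn_Ioi_of_le {f : ℝ → ℝ} {ε T : ℝ} (hε : 0 < ε)
    (hf : ∀ x ∈ Ioi T, ε ≤ f x) : ¬IntegrableOn f (Ioi T) := fun hint => by
  have hconst : IntegrableOn (fun _ => ε) (Ioi T) := by
    refine Integrable.mono hint aestronglyMeasurable_const ?_
    filter_upwards [ae_restrict_mem measurableSet_Ioi] with x hx
    simpa [abs_of_pos hε, abs_of_pos (hε.trans_le (hf x hx))] using hf x hx
  simp [hε.ne'] at hconst

lemma exists_mem_Ioc_mul_le_setIntegral {f : ℝ → ℝ} {s t : ℝ} (hst : s < t)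
    (hf : IntegrableOn f (Ioc s t)) : ∃ x ∈ Ioc s t, (t - s) * f x ≤ ∫ y in Ioc s t, f y := by
  obtain ⟨x, hx, hle⟩ := exists_le_setAverage (by simp [hst]) (by simp) hf
  refine ⟨x, hx, ?_⟩
  rw [setAverage_eq, smul_eq_mul, Real.volume_real_Ioc_of_le hst.le] at hle
  rwa [le_inv_mul_iff₀ (sub_pos.2 hst)] at hle

lemma le_exp_mul_sub_mul_of_exp_mul_le {κ x a p q : ℝ}
    (h : exp (κ * x) * p ≤ exp (κ * a) * q) : p ≤ exp (κ * (a - x)) * q := by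
  rw [mul_sub, exp_sub, div_mul_eq_mul_div, le_div_iff₀ (exp_pos _), mul_comm]
  exact h

section Subsolution

variable {ψ ψ' ψ'' : ℝ → ℝ} {κ k : ℝ}

lemma hasDerivAt_exp_mul_mul (hψ : ∀ x, HasDerivAt ψ (ψ' x) x) (x : ℝ) :
    HasDerivAt (fun y => exp (κ * y) * ψ y) (exp (κ * x) * (ψ' x + κ * ψ x)) x :=
  (((hasDerivAt_id' x).const_mul κ).exp.mul (hψ x)).congr_deriv (by ring)

/-- `(e^{-κx}(ψ' + κψ))' = e^{-κx}(ψ'' - κ²ψ)`. -/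
lemma monotoneOn_exp_neg_mul_deriv_add {s : Set ℝ} (hs : Convex ℝ s)
    (hψ : ∀ x, HasDerivAt ψ (ψ' x) x) (hψ' : ∀ x, HasDerivAt ψ' (ψ'' x) x)
    (hsub : ∀ x ∈ interior s, κ ^ 2 * ψ x ≤ ψ'' x) :
    MonotoneOn (fun x => exp (-κ * x) * (ψ' x + κ * ψ x)) s := by
  have hV : ∀ x, HasDerivAt (fun y => exp (-κ * y) * (ψ' y + κ * ψ y))
      (exp (-κ * x) * (ψ'' x - κ ^ 2 * ψ x)) x := by
    intro x
    convert hasDerivAt_exp_mul_mul (κ := -κ) (ψ := fun y => ψ' y + κ * ψ y)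
      (fun y => (hψ' y).add ((hψ y).const_mul κ)) x using 2
    ring
  refine monotoneOn_of_hasDerivWithinAt_nonneg hs
    (fun x _ => (hV x).continuousAt.continuousWithinAt) (fun x _ => (hV x).hasDerivWithinAt)
    fun x hx => mul_nonneg (exp_pos _).le (sub_nonneg.2 (hsub x hx))

lemma monotoneOn_exp_mul_of_eq_zero {a b : ℝ} (hψ : ∀ x, HasDerivAt ψ (ψ' x) x)
    (hψ' : ∀ x, HasDerivAt ψ' (ψ'' x) x) (hnn : ∀ x ∈ Icc a b, 0 ≤ ψ x) (ha : ψ a = 0)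
    (hsub : ∀ x ∈ Ioo a b, κ ^ 2 * ψ x ≤ ψ'' x) :
    MonotoneOn (fun x => exp (κ * x) * ψ x) (Icc a b) := by
  have hu := hasDerivAt_exp_mul_mul (κ := κ) hψ
  refine monotoneOn_of_hasDerivWithinAt_nonneg (convex_Icc a b)
    (fun x _ => (hu x).continuousAt.continuousWithinAt) (fun x _ => (hu x).hasDerivWithinAt)
    fun x hx => ?_
  rw [interior_Icc] at hx
  refine mul_nonneg (exp_pos _).le (not_lt.1 fun hneg => ?_)
  have hV := monotoneOn_exp_neg_mul_deriv_add (convex_Icc a b) hψ hψ'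
    (by rwa [interior_Icc])
  -- A negative Wronskian at `x` stays negative on `[a, x]`, where `e^{κy}ψ` then strictly
  -- decreases from its value `0` at `a`.
  have hanti : StrictAntiOn (fun y => exp (κ * y) * ψ y) (Icc a x) := by
    refine strictAntiOn_of_hasDerivWithinAt_neg (convex_Icc a x)
      (fun y _ => (hu y).continuousAt.continuousWithinAt) (fun y _ => (hu y).hasDerivWithinAt)
      fun y hy => ?_
    rw [interior_Icc] at hy
    have hVy := hV ⟨hy.1.le, hy.2.le.trans hx.2.le⟩ ⟨hx.1.le, hx.2.le⟩ hy.2.le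
    have hVx := mul_neg_of_pos_of_neg (exp_pos (-κ * x)) hneg
    have := neg_of_mul_neg_right (hVy.trans_lt hVx) (exp_pos _).le
    exact mul_neg_of_pos_of_neg (exp_pos _) this
  have := hanti (left_mem_Icc.2 hx.1.le) (right_mem_Icc.2 hx.1.le) hx.1
  simp only [ha, mul_zero] at this
  exact this.not_ge (mul_nonneg (exp_pos _).le (hnn x ⟨hx.1.le, hx.2.le⟩))

lemma not_integrableOn_Ioi_of_le_deriv_add {M b : ℝ} (hκ : 0 < κ) (hM : 0 < M)
    (hψ : ∀ x, HasDerivAt ψ (ψ' x) x) (hb : 0 ≤ ψ b)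
    (hge : ∀ x ∈ Ici b, M ≤ ψ' x + κ * ψ x) : ¬IntegrableOn ψ (Ioi b) := by
  have hu := hasDerivAt_exp_mul_mul (κ := κ) (ψ := fun x => ψ x - M / κ)
    fun x => (hψ x).sub_const _
  have hmono : MonotoneOn (fun x => exp (κ * x) * (ψ x - M / κ)) (Ici b) := by
    refine monotoneOn_of_hasDerivWithinAt_nonneg (convex_Ici b)
      (fun x _ => (hu x).continuousAt.continuousWithinAt) (fun x _ => (hu x).hasDerivWithinAt)
      fun x hx => mul_nonneg (exp_pos _).le ?_
    rw [interior_Ici] at hx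
    rw [mul_sub, mul_div_cancel₀ _ hκ.ne']
    linarith [hge x (mem_Ici.2 hx.le)]
  -- `ψ x ≥ (M/κ)(1 - e^{κ(b - x)}) ≥ (M/κ)(1 - e^{-κ})` for `x > b + 1`.
  intro hint
  refine not_integrableOn_Ioi_of_le (ε := M / κ * (1 - exp (-κ))) ?_ (fun x hx => ?_)
    (hint.mono_set (Ioi_subset_Ioi (le_add_of_nonneg_right zero_le_one)))
  · exact mul_pos (div_pos hM hκ) (sub_pos.2 (exp_lt_one_iff.2 (neg_lt_zero.2 hκ)))
  · have hx : b + 1 < x := hx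
    have hbx := hmono self_mem_Ici (mem_Ici.2 (by linarith)) (by linarith)
    have hexp : exp (κ * b) ≤ exp (κ * x) * exp (-κ) := by
      rw [← exp_add]
      exact exp_le_exp.2 (by nlinarith)
    have hψb := mul_nonneg (exp_pos (κ * b)).le hb
    have hMκ := div_pos hM hκ
    refine le_of_mul_le_mul_left ?_ (exp_pos (κ * x))
    simp only at hbx
    nlinarith [mul_le_mul_of_nonneg_right hexp hMκ.le]

lemma antitoneOn_exp_mul_of_integrableOn {a : ℝ} (hκ : 0 < κ) (hψ : ∀ x, HasDerivAt ψ (ψ' x) x)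
    (hψ' : ∀ x, HasDerivAt ψ' (ψ'' x) x) (hnn : ∀ x ∈ Ici a, 0 ≤ ψ x)
    (hint : IntegrableOn ψ (Ioi a)) (hsub : ∀ x ∈ Ioi a, κ ^ 2 * ψ x ≤ ψ'' x) :
    AntitoneOn (fun x => exp (κ * x) * ψ x) (Ici a) := by
  have hu := hasDerivAt_exp_mul_mul (κ := κ) hψ
  refine antitoneOn_of_hasDerivWithinAt_nonpos (convex_Ici a)
    (fun x _ => (hu x).continuousAt.continuousWithinAt) (fun x _ => (hu x).hasDerivWithinAt)
    fun x hx => ?_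
  rw [interior_Ici] at hx
  refine mul_nonpos_of_nonneg_of_nonpos (exp_pos _).le (not_lt.1 fun hpos => ?_)
  have hV := monotoneOn_exp_neg_mul_deriv_add (convex_Ici a) hψ hψ' (by rwa [interior_Ici])
  refine not_integrableOn_Ioi_of_le_deriv_add hκ hpos hψ (hnn x (mem_Ici.2 hx.le)) (fun y hy => ?_)
    (hint.mono_set (Ioi_subset_Ioi (le_of_lt hx)))
  -- A positive Wronskian at `x` keeps `ψ' + κψ` above its value at `x` on `[x, ∞)`.
  have hVxy := hV (mem_Ici.2 (le_of_lt hx)) (mem_Ici.2 (hx.le.trans hy)) hy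
  have hexp : exp (-κ * y) ≤ exp (-κ * x) := exp_le_exp.2 (by nlinarith [mem_Ici.1 hy])
  exact le_of_mul_le_mul_left ((mul_le_mul_of_nonneg_right hexp hpos.le).trans hVxy) (exp_pos _)

lemma setIntegral_Ioc_le_setIntegral_Ioi {s t : ℝ} (hs : 0 ≤ s) (hnn : ∀ x, 0 ≤ ψ x)
    (hint : IntegrableOn ψ (Ioi 0)) : ∫ x in Ioc s t, ψ x ≤ ∫ x in Ioi 0, ψ x :=
  setIntegral_mono_set hint (ae_of_all _ fun x => hnn x)
    (LE.le.eventuallyLE fun _ hx => hs.trans_lt hx.1)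

lemma setIntegral_Ioo_le_of_subsolution {r : ℝ} (hk : 0 ≤ k) (hr : 0 < r)
    (hψ : ∀ x, HasDerivAt ψ (ψ' x) x) (hψ' : ∀ x, HasDerivAt ψ' (ψ'' x) x)
    (hnn : ∀ x, 0 ≤ ψ x) (h0 : ψ 0 = 0) (hint : IntegrableOn ψ (Ioi 0))
    (hsub : ∀ x ∈ Ioo 0 r, k ^ 2 * ψ x ≤ ψ'' x) :
    ∫ x in Ioo 0 (r / 2), ψ x ≤ 2 * (∫ x in Ioi 0, ψ x) * exp (-k * (r / 4)) := by
  set I := ∫ x in Ioi 0, ψ x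
  obtain ⟨a, ha, hψa⟩ := exists_mem_Ioc_mul_le_setIntegral (s := 3 * r / 4) (t := r)
    (by linarith) (hint.mono_set fun x hx => (by linarith : (0 : ℝ) < 3 * r / 4).trans hx.1)
  replace hψa := hψa.trans (setIntegral_Ioc_le_setIntegral_Ioi (by positivity) hnn hint)
  have hmono := monotoneOn_exp_mul_of_eq_zero (κ := -k) (a := 0) (b := a) hψ hψ'
    (fun x _ => hnn x) h0 fun x hx => by simpa using hsub x ⟨hx.1, hx.2.trans_le ha.2⟩
  have hpt : ∀ x ∈ Ioo 0 (r / 2), ψ x ≤ exp (-k * (r / 4)) * (4 * I / r) := by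
    intro x hx
    have hxa : x ≤ a := by linarith [hx.2, ha.1]
    refine (le_exp_mul_sub_mul_of_exp_mul_le (hmono ⟨hx.1.le, hxa⟩ ⟨hx.1.le.trans hxa, le_rfl⟩
      hxa)).trans (mul_le_mul ?_ ?_ (hnn a) (exp_pos _).le)
    · exact exp_le_exp.2 (by nlinarith [hx.2, ha.1])
    · rw [le_div_iff₀ hr]
      linarith
  calc ∫ x in Ioo 0 (r / 2), ψ x
      ≤ ∫ _ in Ioo 0 (r / 2), exp (-k * (r / 4)) * (4 * I / r) :=
        setIntegral_mono_on (hint.mono_set Ioo_subset_Ioi_self) (integrableOn_const (by simp))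
          measurableSet_Ioo hpt
    _ = 2 * I * exp (-k * (r / 4)) := by
        rw [setIntegral_const, Real.volume_real_Ioo_of_le (by positivity), smul_eq_mul]
        field_simp
        ring

lemma setIntegral_Ioi_le_of_subsolution {R : ℝ} (hk : 0 < k) (hR : 0 < R)
    (hψ : ∀ x, HasDerivAt ψ (ψ' x) x) (hψ' : ∀ x, HasDerivAt ψ' (ψ'' x) x)
    (hnn : ∀ x, 0 ≤ ψ x) (hint : IntegrableOn ψ (Ioi 0))
    (hsub : ∀ x ∈ Ioi R, k ^ 2 * ψ x ≤ ψ'' x) :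
    ∫ x in Ioi (2 * R), ψ x ≤ 2 / (R * k) * (∫ x in Ioi 0, ψ x) * exp (-k * (R / 2)) := by
  set I := ∫ x in Ioi 0, ψ x
  obtain ⟨a, ha, hψa⟩ := exists_mem_Ioc_mul_le_setIntegral (s := R) (t := 3 * R / 2)
    (by linarith) (hint.mono_set fun x hx => hR.trans hx.1)
  replace hψa : ψ a ≤ 2 * I / R := by
    rw [le_div_iff₀ hR]
    linarith [setIntegral_Ioc_le_setIntegral_Ioi (t := 3 * R / 2) hR.le hnn hint]
  have hanti := antitoneOn_exp_mul_of_integrableOn hk hψ hψ' (fun x _ => hnn x)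
    (hint.mono_set (Ioi_subset_Ioi (hR.trans ha.1).le)) fun x hx => hsub x (ha.1.trans hx)
  have hpt : ∀ x ∈ Ioi (2 * R), ψ x ≤ exp (k * a) * ψ a * exp (-k * x) := by
    intro x hx
    have hax : a ≤ x := by linarith [mem_Ioi.1 hx, ha.2]
    refine (le_exp_mul_sub_mul_of_exp_mul_le (hanti self_mem_Ici (mem_Ici.2 hax) hax)).trans_eq ?_
    rw [mul_right_comm, ← exp_add]
    ring_nf
  have hexp : exp (k * a) * exp (-k * (2 * R)) ≤ exp (-k * (R / 2)) := by
    rw [← exp_add]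
    exact exp_le_exp.2 (by nlinarith [ha.2])
  calc ∫ x in Ioi (2 * R), ψ x
      ≤ ∫ x in Ioi (2 * R), exp (k * a) * ψ a * exp (-k * x) :=
        setIntegral_mono_on (hint.mono_set (Ioi_subset_Ioi (by positivity)))
          ((integrableOn_exp_mul_Ioi (neg_lt_zero.2 hk) _).const_mul _) measurableSet_Ioi hpt
    _ = exp (k * a) * exp (-k * (2 * R)) * ψ a / k := by
        rw [integral_const_mul, integral_exp_mul_Ioi (neg_lt_zero.2 hk)]
        field_simp
    _ ≤ exp (-k * (R / 2)) * (2 * I / R) / k :=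
        div_le_div_of_nonneg_right (mul_le_mul hexp hψa (hnn a) (exp_pos _).le) hk.le
    _ = 2 / (R * k) * I * exp (-k * (R / 2)) := by
        field_simp

end Subsolution

lemma hasDerivAt_sq_of_contDiff_two {φ : ℝ → ℝ} (hφ : ContDiff ℝ 2 φ) :
    (∀ x, HasDerivAt (fun y => φ y ^ 2) (2 * φ x * deriv φ x) x) ∧
      ∀ x, HasDerivAt (fun y => 2 * φ y * deriv φ y)
        (2 * deriv φ x ^ 2 + 2 * φ x * iteratedDeriv 2 φ x) x := by
  obtain ⟨hφ₁, -, hφ₂⟩ := contDiff_succ_iff_deriv.1 (show ContDiff ℝ (1 + 1) φ from hφ)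
  have hφ'' : ∀ x, HasDerivAt (deriv φ) (iteratedDeriv 2 φ x) x := fun x => by
    rw [iteratedDeriv_succ, iteratedDeriv_one]
    exact (hφ₂.differentiable one_ne_zero x).hasDerivAt
  refine ⟨fun x => ?_, fun x => ?_⟩
  · exact ((hφ₁ x).hasDerivAt.pow 2).congr_deriv (by ring)
  · exact (((hφ₁ x).hasDerivAt.const_mul 2).mul (hφ'' x)).congr_deriv (by ring)

/-- With `p, p', p''` the values of `φ, φ', φ''` at a point where `W - E ≥ c`, the right side is
`(φ²)''`. -/
lemma sq_mul_sq_le_of_eigenvalue {h k c w E p p' p'' : ℝ} (hh : h ≠ 0)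
    (hk : h ^ 2 * k ^ 2 ≤ 2 * c) (hc : c ≤ w - E) (heq : -h ^ 2 * p'' + w * p = E * p) :
    k ^ 2 * p ^ 2 ≤ 2 * p' ^ 2 + 2 * p * p'' := by
  have hh2 : 0 < h ^ 2 := by positivity
  refine le_of_mul_le_mul_left ?_ hh2
  have hp'' : h ^ 2 * (2 * p * p'') = 2 * (w - E) * p ^ 2 := by linear_combination (-2 * p) * heq
  nlinarith [mul_le_mul_of_nonneg_right hk (sq_nonneg p),
    mul_le_mul_of_nonneg_right hc (sq_nonneg p), mul_nonneg hh2.le (sq_nonneg p')]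

lemma two_mul_exp_add_le_exp {k r R : ℝ} (hr : 0 < r) (hrR : r ≤ R) (hk : 32 < k * r) :
    2 * exp (-k * (r / 4)) + 2 / (R * k) * exp (-k * (R / 2)) ≤ exp (-k * (r / 8)) := by
  have hk0 : 0 < k := pos_of_mul_pos_left (by linarith) hr.le
  have hRk : 2 / (R * k) ≤ 2 := div_le_self zero_le_two (by nlinarith)
  have hexp : exp (-k * (R / 2)) ≤ exp (-k * (r / 4)) := exp_le_exp.2 (by nlinarith)
  have hfour : 4 ≤ exp (k * (r / 8)) := by linarith [add_one_le_exp (k * (r / 8))]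
  calc 2 * exp (-k * (r / 4)) + 2 / (R * k) * exp (-k * (R / 2))
      ≤ 4 * exp (-k * (r / 4)) := by nlinarith [exp_pos (-k * (R / 2))]
    _ ≤ exp (k * (r / 8)) * exp (-k * (r / 4)) := by gcongr
    _ = exp (-k * (r / 8)) := by rw [← exp_add]; ring_nf

/-- 1D Agmon estimate: if `W − E ≥ c > 0` on `(0,r₀) ∪ (R₀,∞)` and
`φ` is a normalized Dirichlet eigenfunction of `−h²d²/dR² + W` with eigenvalue `E`,
then `‖φ‖_{L²((0,r₀/2)∪(2R₀,∞))} ≤ e^{−c₀/h}` for `0 < h < h₀`, with `c₀, h₀`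
depending only on `c, r₀, R₀, sup W, E`. -/
theorem stmt_16 (c r₀ R₀ SW E : ℝ) (hc : 0 < c) (hr₀ : 0 < r₀) (hrR : r₀ < R₀) :
    ∃ c₀ > (0 : ℝ), ∃ h₀ > (0 : ℝ), ∀ W : ℝ → ℝ,
      Continuous W → BddBelow (Set.range W) → (∀ R, W R ≤ SW) →
      (∀ R : ℝ, (0 < R ∧ R < r₀) ∨ R₀ < R → c ≤ W R - E) →
      ∀ h : ℝ, 0 < h → h < h₀ →
      ∀ φ : ℝ → ℝ, ContDiff ℝ 2 φ → φ 0 = 0 →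
        (∀ R : ℝ, 0 < R → -h ^ 2 * iteratedDeriv 2 φ R + W R * φ R = E * φ R) →
        (∫ R in Set.Ioi (0 : ℝ), φ R ^ 2) = 1 →
        (∫ R in Set.Ioo (0 : ℝ) (r₀ / 2) ∪ Set.Ioi (2 * R₀), φ R ^ 2) ≤
          Real.exp (-c₀ / h) ^ 2 := by
  set κ := √(2 * c)
  have hκ : 0 < κ := sqrt_pos.2 (by linarith)
  refine ⟨κ * r₀ / 16, by positivity, κ * r₀ / 32, by positivity, ?_⟩
  intro W _ _ _ hWE h hh hh₀ φ hφ hφ0 hODE hnorm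
  set k := κ / h
  have hk : 0 < k := by positivity
  have hhk : h ^ 2 * k ^ 2 ≤ 2 * c := by
    rw [div_pow, mul_div_cancel₀ _ (by positivity), sq_sqrt (by linarith)]
  obtain ⟨hψ, hψ'⟩ := hasDerivAt_sq_of_contDiff_two hφ
  have hsub : ∀ x, (0 < x ∧ x < r₀) ∨ R₀ < x →
      k ^ 2 * φ x ^ 2 ≤ 2 * deriv φ x ^ 2 + 2 * φ x * iteratedDeriv 2 φ x := fun x hx =>
    sq_mul_sq_le_of_eigenvalue hh.ne' hhk (hWE x hx)
      (hODE x (hx.elim And.left fun hx => (hr₀.trans hrR).trans hx))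
  have hint : IntegrableOn (fun x => φ x ^ 2) (Ioi 0) :=
    Integrable.of_integral_ne_zero (by rw [hnorm]; exact one_ne_zero)
  have hin := setIntegral_Ioo_le_of_subsolution hk.le hr₀ hψ hψ' (fun x => sq_nonneg _)
    (by simp [hφ0]) hint fun x hx => hsub x (Or.inl hx)
  have hout := setIntegral_Ioi_le_of_subsolution hk (hr₀.trans hrR) hψ hψ'
    (fun x => sq_nonneg _) hint fun x hx => hsub x (Or.inr hx)
  rw [hnorm, mul_one] at hin hout
  rw [setIntegral_union (Set.disjoint_left.2 fun x hx hx' => by linarith [hx.2, mem_Ioi.1 hx'])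
    measurableSet_Ioi (hint.mono_set Ioo_subset_Ioi_self)
    (hint.mono_set (Ioi_subset_Ioi (by linarith)))]
  calc _ ≤ exp (-k * (r₀ / 8)) := (add_le_add hin hout).trans (two_mul_exp_add_le_exp hr₀
        hrR.le (by rw [div_mul_eq_mul_div, lt_div_iff₀ hh]; linarith))
    _ = exp (-(κ * r₀ / 16) / h) ^ 2 := by
      rw [← exp_nat_mul]
      congr 1
      simp only [k]
      ring
end
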